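/- arXiv:math/0306178 — 2 statements merged into one kernel-verified Lean document; each statement's English description precedes it below -/
import Mathlib

section
/- Let P ⊆ Free(K_n) and Q ⊆ Free(K̄_m) be graph classes, and let τ = R(m,n) be a Ramsey number such that every graph on more than τ vertices contains an independent set of size m or a clique of size n. Then for every graph G ∈ P∘Q and every subset B ⊆ V(G) with G[B] ∈ P, at least one of the following holds: (a) there is a subset A ⊆ V(G) with G[A] ∈ P, G[V−A] ∈ Q, and |A−B| ≤ τ; or (b) there is a subset C ⊆ V(G) with G[C] ∈ P, |C| = |B|+1, and |B−C| ≤ τ. -/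
open SimpleGraph

attribute [local instance] Fintype.ofFinite

/-- A graph property: a (type-indexed) class of finite simple graphs. -/
def GraphProperty : Type 1 := ∀ ⦃V : Type⦄ [Fintype V], SimpleGraph V → Prop

/-- Closure under isomorphism. -/
def IsoClosed (P : GraphProperty) : Prop :=
  ∀ ⦃V W : Type⦄ [Fintype V] [Fintype W] (G : SimpleGraph V) (H : SimpleGraph W),
    G ≃g H → P G → P H

/-- Closure under disjoint unions (additivity). -/
def AdditiveProp (P : GraphProperty) : Prop :=
  ∀ ⦃V W : Type⦄ [Fintype V] [Fintype W] (G : SimpleGraph V) (H : SimpleGraph W),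
    P G → P H → P (G ⊕g H)

/-- Closure under deletion of a vertex (hereditariness). -/
def HereditaryProp (P : GraphProperty) : Prop :=
  ∀ ⦃V : Type⦄ [Fintype V] (G : SimpleGraph V) (v : V), P G → P (G.induce {v}ᶜ)

/-- Closure under deletion of vertices and edges (monotonicity). -/
def MonotoneProp (P : GraphProperty) : Prop :=
  (∀ ⦃V : Type⦄ [Fintype V] (G : SimpleGraph V) (v : V), P G → P (G.induce {v}ᶜ)) ∧
  (∀ ⦃V : Type⦄ [Fintype V] (G : SimpleGraph V) (e : Sym2 V), P G → P (G.deleteEdges {e}))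

/-- The product `P₁ ∘ P₂`: graphs whose vertex set splits into a `P₁`-part and a `P₂`-part. -/
def ProductProp (P₁ P₂ : GraphProperty) : GraphProperty :=
  fun V _ G => ∃ s : Set V, P₁ (G.induce s) ∧ P₂ (G.induce sᶜ)

/-- The complementary property `P̄ = {Ḡ : G ∈ P}`. -/
def CoProp (P : GraphProperty) : GraphProperty :=
  fun V _ G => P Gᶜ

def induce_subset_iso {V : Type} (G : SimpleGraph V) {s t : Set V} (hst : s ⊆ t) :
    ((G.induce t).induce {x : t | (x : V) ∈ s}) ≃g (G.induce s) where
  toEquiv := Equiv.subtypeSubtypeEquivSubtype (fun {x} hx => hst hx)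
  map_rel_iff' := Iff.rfl

lemma prop_inst (P : GraphProperty) {V : Type} {i1 i2 : Fintype V} {G : SimpleGraph V}
    (h : @P V i1 G) : @P V i2 G := by cases Subsingleton.elim i1 i2; exact h

lemma her_of_subset (P : GraphProperty) (hPiso : IsoClosed P)
    (hPher : ∀ ⦃V : Type⦄ [Fintype V] (G : SimpleGraph V) (s : Set V), P G → P (G.induce s))
    {V : Type} [Fintype V] (G : SimpleGraph V) {s t : Set V} (hst : s ⊆ t)
    (h : P (G.induce t)) : P (G.induce s) :=
  prop_inst P (hPiso _ _ (induce_subset_iso G hst) (hPher (G.induce t) {x : t | (x : V) ∈ s} h))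

theorem key_lemma (P Q : GraphProperty) (n m τ : ℕ)
    (hPiso : IsoClosed P) (hQiso : IsoClosed Q)
    (hPher : ∀ ⦃V : Type⦄ [Fintype V] (G : SimpleGraph V) (s : Set V), P G → P (G.induce s))
    (hQher : ∀ ⦃V : Type⦄ [Fintype V] (G : SimpleGraph V) (s : Set V), Q G → Q (G.induce s))
    (hPfree : ∀ ⦃V : Type⦄ [Fintype V] (G : SimpleGraph V), P G → G.CliqueFree n)
    (hQfree : ∀ ⦃V : Type⦄ [Fintype V] (G : SimpleGraph V), Q G → Gᶜ.CliqueFree m)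
    (hRamsey : ∀ ⦃V : Type⦄ [Fintype V] (G : SimpleGraph V),
      τ < Fintype.card V → ¬ G.CliqueFree n ∨ ¬ Gᶜ.CliqueFree m)
    {V : Type} [Fintype V] (G : SimpleGraph V)
    (hG : ProductProp P Q G) (B : Set V) (hB : P (G.induce B)) :
    (∃ A : Set V, P (G.induce A) ∧ Q (G.induce Aᶜ) ∧ (A \ B).ncard ≤ τ) ∨
    (∃ C : Set V, P (G.induce C) ∧ C.ncard = B.ncard + 1 ∧ (B \ C).ncard ≤ τ) := by
  classical
  obtain ⟨s, hs1, hs2⟩ := hG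
  by_cases hcase : (s \ B).ncard ≤ τ
  · exact Or.inl ⟨s, hs1, hs2, hcase⟩
  push_neg at hcase
  have hfin : ∀ u : Set V, u.Finite := fun u => u.toFinite
  have hBs : (B \ s).ncard ≤ τ := by
    by_contra hlt
    push_neg at hlt
    have hcard : τ < Fintype.card (B \ s : Set V) := by
      have : Fintype.card (B \ s : Set V) = (B \ s).ncard := by
        rw [← Nat.card_coe_set_eq, Nat.card_eq_fintype_card]
      omega
    have hP' : P (G.induce (B \ s)) :=
      prop_inst P (her_of_subset P hPiso hPher G Set.diff_subset hB)
    have hQ' : Q (G.induce (B \ s)) :=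
      prop_inst Q (her_of_subset Q hQiso hQher G (fun x hx => hx.2) hs2)
    rcases hRamsey (G.induce (B \ s)) hcard with h | h
    · exact h (hPfree _ hP')
    · exact h (hQfree _ hQ')
  have hcardB : B.ncard + 1 ≤ s.ncard := by
    have h1 : B.ncard = (B ∩ s).ncard + (B \ s).ncard :=
      (Set.ncard_inter_add_ncard_diff_eq_ncard B s (hfin B)).symm
    have h2 : s.ncard = (s ∩ B).ncard + (s \ B).ncard :=
      (Set.ncard_inter_add_ncard_diff_eq_ncard s B (hfin s)).symm
    rw [h1, h2, Set.inter_comm s B]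
    omega
  have hBsub : B ∩ s ⊆ s := Set.inter_subset_right
  have hle : (B ∩ s).ncard ≤ B.ncard + 1 :=
    le_trans (Set.ncard_le_ncard Set.inter_subset_left (hfin B)) (Nat.le_succ _)
  obtain ⟨C, hC1, hC2, hC3⟩ := Set.exists_subsuperset_card_eq hBsub hle hcardB
  refine Or.inr ⟨C, prop_inst P (her_of_subset P hPiso hPher G hC2 hs1), hC3, ?_⟩
  refine le_trans (Set.ncard_le_ncard ?_ (hfin _)) hBs
  intro x hx
  exact ⟨hx.1, fun hxs => hx.2 (hC1 ⟨hx.1, hxs⟩)⟩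
end

section
/- Let G be a graph and let G' be obtained from G by adding a disjoint triangle T = {1,2,3} with no edges between G and T. Then G is 3-colorable if and only if V(G') can be partitioned into sets U and W such that G'[U] is bipartite and G'[W] contains no induced complement of P3 (i.e., no induced subgraph consisting of an edge plus an isolated vertex). -/
open SimpleGraph

attribute [local instance] Fintype.ofFinite

/-- `H` is `P̄₃`-free: no three distinct vertices induce exactly one edge. -/
def P3barFree {W : Type*} (H : SimpleGraph W) : Prop :=
  ∀ a b c : W, a ≠ b → a ≠ c → b ≠ c → ¬ (H.Adj a b ∧ ¬ H.Adj a c ∧ ¬ H.Adj b c)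

/-- `H` is complete bipartite: vertex set splits into two independent sets
with all edges in between. -/
def IsCompleteBipartite {W : Type*} (H : SimpleGraph W) : Prop :=
  ∃ A : Set W, (∀ a ∈ A, ∀ b ∈ A, ¬ H.Adj a b) ∧
    (∀ a ∈ Aᶜ, ∀ b ∈ Aᶜ, ¬ H.Adj a b) ∧
    (∀ a ∈ A, ∀ b ∈ Aᶜ, H.Adj a b)

/-- `G` together with a disjoint triangle. -/
def addTriangle {V : Type} (G : SimpleGraph V) : SimpleGraph (V ⊕ Fin 3) :=
  SimpleGraph.fromRel (fun x y =>
    match x, y with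
    | .inl a, .inl b => G.Adj a b
    | .inr _, .inr _ => True
    | _, _ => False)

lemma addTriangle_inl_inl {V : Type} (G : SimpleGraph V) (a b : V) :
    (addTriangle G).Adj (.inl a) (.inl b) ↔ G.Adj a b := by
  simp [addTriangle, G.adj_comm a b]
  intro h; exact h.ne'

lemma addTriangle_inr_inr {V : Type} (G : SimpleGraph V) (i j : Fin 3) :
    (addTriangle G).Adj (.inr i) (.inr j) ↔ i ≠ j := by
  simp [addTriangle]

lemma addTriangle_inl_inr {V : Type} (G : SimpleGraph V) (a : V) (i : Fin 3) :
    ¬ (addTriangle G).Adj (.inl a) (.inr i) := by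
  simp [addTriangle]

lemma induce_adj' {V : Type} (G : SimpleGraph V) (s : Set V) (x y : s) :
    (G.induce s).Adj x y ↔ G.Adj x y := by
  simp [comap_adj]

theorem bipartite_P3barFree_reduction {V : Type} [Fintype V] (G : SimpleGraph V) :
    G.Colorable 3 ↔
      ∃ U : Set (V ⊕ Fin 3), ((addTriangle G).induce U).Colorable 2 ∧
        P3barFree ((addTriangle G).induce Uᶜ) := by
  constructor
  · rintro ⟨c⟩
    refine ⟨{x | Sum.elim (fun v => c v ≠ 2) (fun i => i ≠ 2) x}, ⟨?_⟩, ?_⟩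
    · refine Coloring.mk
        (fun x => Sum.elim (fun v => if c v = 0 then (0 : Fin 2) else 1)
          (fun i => if i = 0 then (0 : Fin 2) else 1) x.1) ?_
      rintro ⟨x, hx⟩ ⟨y, hy⟩ hadj
      rw [induce_adj'] at hadj
      match x, y with
      | .inl a, .inl b =>
        rw [addTriangle_inl_inl] at hadj
        have hne := c.valid hadj
        simp only [Set.mem_setOf_eq, Sum.elim_inl] at hx hy ⊢
        revert hne hx hy
        generalize c a = p; generalize c b = q
        revert p q; decide
      | .inr i, .inr j =>
        rw [addTriangle_inr_inr] at hadj
        simp only [Set.mem_setOf_eq, Sum.elim_inr] at hx hy ⊢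
        revert i j
        decide
      | .inl a, .inr i => exact absurd hadj (addTriangle_inl_inr G a i)
      | .inr i, .inl a => exact absurd hadj.symm (addTriangle_inl_inr G a i)
    · rintro ⟨x, hx⟩ ⟨y, hy⟩ z hxy _ _ ⟨hadj, -⟩
      rw [induce_adj'] at hadj
      match x, y with
      | .inl a, .inl b =>
        rw [addTriangle_inl_inl] at hadj
        have hne := c.valid hadj
        simp only [Set.mem_compl_iff, Set.mem_setOf_eq, Sum.elim_inl, not_not] at hx hy
        exact hne (hx.trans hy.symm)
      | .inr i, .inr j =>
        rw [addTriangle_inr_inr] at hadj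
        simp only [Set.mem_compl_iff, Set.mem_setOf_eq, Sum.elim_inr, not_not] at hx hy
        exact hadj (hx.trans hy.symm)
      | .inl a, .inr i => exact addTriangle_inl_inr G a i hadj
      | .inr i, .inl a => exact addTriangle_inl_inr G a i hadj.symm
  · rintro ⟨U, ⟨c2⟩, hP3⟩
    classical
    -- some triangle vertex is outside U
    have htri : ∃ i : Fin 3, (Sum.inr i : V ⊕ Fin 3) ∉ U := by
      by_contra h
      push_neg at h
      have key : ∀ i j : Fin 3, i ≠ j →
          c2 ⟨.inr i, h i⟩ ≠ c2 ⟨.inr j, h j⟩ := by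
        intro i j hij
        apply c2.valid
        rw [induce_adj', addTriangle_inr_inr]
        exact hij
      have h01 := key 0 1 (by decide)
      have h02 := key 0 2 (by decide)
      have h12 := key 1 2 (by decide)
      revert h01 h02 h12
      generalize c2 ⟨.inr 0, h 0⟩ = p
      generalize c2 ⟨.inr 1, h 1⟩ = q
      generalize c2 ⟨.inr 2, h 2⟩ = r
      revert p q r; decide
    obtain ⟨t, ht⟩ := htri
    -- Uᶜ ∩ inl part is independent
    have hind : ∀ a b : V, (Sum.inl a : V ⊕ Fin 3) ∉ U → (Sum.inl b : V ⊕ Fin 3) ∉ U →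
        ¬ G.Adj a b := by
      intro a b ha hb hadj
      refine hP3 ⟨.inl a, ha⟩ ⟨.inl b, hb⟩ ⟨.inr t, ht⟩
        (by simp [Subtype.ext_iff, hadj.ne]) (by simp [Subtype.ext_iff])
        (by simp [Subtype.ext_iff]) ⟨?_, ?_, ?_⟩
      · rw [induce_adj', addTriangle_inl_inl]; exact hadj
      · rw [induce_adj']; exact addTriangle_inl_inr G a t
      · rw [induce_adj']; exact addTriangle_inl_inr G b t
    refine ⟨Coloring.mk (fun v => if h : (Sum.inl v : V ⊕ Fin 3) ∈ U then
        Fin.castSucc (c2 ⟨.inl v, h⟩) else 2) ?_⟩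
    intro a b hadj
    by_cases ha : (Sum.inl a : V ⊕ Fin 3) ∈ U <;>
      by_cases hb : (Sum.inl b : V ⊕ Fin 3) ∈ U
    · simp only [ha, hb, dif_pos]
      have : c2 ⟨.inl a, ha⟩ ≠ c2 ⟨.inl b, hb⟩ := by
        apply c2.valid
        rw [induce_adj', addTriangle_inl_inl]
        exact hadj
      exact fun h => this (Fin.castSucc_injective 2 h)
    · simp only [ha, hb, dif_pos, dif_neg, not_false_iff]
      exact (Fin.castSucc_lt_last _).ne
    · simp only [ha, hb, dif_pos, dif_neg, not_false_iff]
      exact (Fin.castSucc_lt_last _).ne'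
    · exact absurd hadj (hind a b ha hb)
end
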